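/- arXiv:2311.18090 — 3 statements merged into one kernel-verified Lean document; each statement's English description precedes it below -/
import Mathlib

section
/- Let (Ω, P) be a probability space, let s ≥ 2 be a natural number, let N : Ω → ℕ be a geometric random variable with parameter 1/s (counting failures before the first success), i.e. P(N = k) = (1/s)·(1 − 1/s)^k for all k ∈ ℕ, let (Z_i)_{i∈ℕ} be an i.i.d. sequence of nonnegative integrable real random variables with common mean μ, with the sequence (Z_i) independent of N, and let t ≥ 0 be a real number. Define the total hitting time T = t·(N + 1) + Σ_{i<N} Z_i. Then T is integrable and E[T] = t + (s − 1)·(t + μ). -/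
/-!
Writing `T = t + ∑ i, (t + Z i) · 1{i < N}`, the event `{i < N}` is a function of `N` and hence
independent of `Z i`, so by Tonelli `E[T] = t + (t + μ) · ∑ i, P(i < N)` (Wald's identity). For
`N` geometric with parameter `p = 1/s` the tails are `P(i < N) = (1 - p)^(i+1)`, whose sum is the
mean `(1 - p)/p = s - 1` of `N`.
-/

open MeasureTheory ProbabilityTheory Finset
open scoped ENNReal

section Geometric

def IsGeometric {Ω : Type*} [MeasurableSpace Ω] (P : Measure Ω) (N : Ω → ℕ) (p : ℝ) : Prop :=
  ∀ k : ℕ, P {ω | N ω = k} = ENNReal.ofReal (p * (1 - p) ^ k)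

variable {Ω : Type*} [MeasurableSpace Ω] {P : Measure Ω} [IsProbabilityMeasure P] {N : Ω → ℕ}
  {p : ℝ}

lemma IsGeometric.measureReal_lt (hgeo : IsGeometric P N p) (hN : Measurable N)
    (hp₀ : 0 ≤ p) (hp₁ : p ≤ 1) (i : ℕ) :
    P.real {ω | i < N ω} = (1 - p) ^ (i + 1) := by
  have hcompl : {ω | i < N ω} = (N ⁻¹' ↑(range (i + 1)))ᶜ := by ext; simp
  have hfiber (k : ℕ) : P.real (N ⁻¹' {k}) = p * (1 - p) ^ k := by
    rw [measureReal_def, show N ⁻¹' {k} = {ω | N ω = k} from rfl, hgeo k,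
      ENNReal.toReal_ofReal (mul_nonneg hp₀ (pow_nonneg (sub_nonneg.2 hp₁) k))]
  have hgeom := mul_neg_geom_sum (1 - p) (i + 1)
  rw [sub_sub_cancel] at hgeom
  rw [hcompl, probReal_compl_eq_one_sub (hN (range (i + 1)).measurableSet),
    ← sum_measureReal_preimage_singleton _ fun k _ => hN (measurableSet_singleton k)]
  simp_rw [hfiber, ← mul_sum, hgeom, sub_sub_cancel]

lemma IsGeometric.hasSum_measureReal_lt (hgeo : IsGeometric P N p) (hN : Measurable N)
    (hp₀ : 0 < p) (hp₁ : p ≤ 1) :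
    HasSum (fun i => P.real {ω | i < N ω}) ((1 - p) / p) := by
  have := (hasSum_geometric_of_lt_one (by linarith) (by linarith : 1 - p < 1)).mul_left (1 - p)
  rw [sub_sub_cancel, ← div_eq_mul_inv] at this
  simpa [hgeo.measureReal_lt hN hp₀.le hp₁, pow_succ'] using this

end Geometric

section Wald

variable {Ω : Type*} [MeasurableSpace Ω] {P : Measure Ω} {N : Ω → ℕ}

theorem lintegral_sum_range_of_indepFun {X : ℕ → Ω → ℝ≥0∞}
    (hX : ∀ i, Measurable (X i)) (hN : Measurable N)
    (hXN : IndepFun (fun ω i => X i ω) N P) :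
    ∫⁻ ω, ∑ i ∈ range (N ω), X i ω ∂P = ∑' i, (∫⁻ ω, X i ω ∂P) * P {ω | i < N ω} := by
  have hsum (ω : Ω) :
      ∑ i ∈ range (N ω), X i ω = ∑' i, X i ω * (Set.Ioi i).indicator 1 (N ω) := by
    rw [tsum_eq_sum (s := range (N ω)) fun i hi => by simp_all]
    exact sum_congr rfl fun i hi => by simp_all
  have hind (i : ℕ) : Measurable ((Set.Ioi i).indicator (1 : ℕ → ℝ≥0∞)) :=
    measurable_of_countable _
  have hterm (i : ℕ) : ∫⁻ ω, X i ω * (Set.Ioi i).indicator 1 (N ω) ∂P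
      = (∫⁻ ω, X i ω ∂P) * P {ω | i < N ω} := by
    rw [lintegral_mul_eq_lintegral_mul_lintegral_of_indepFun''
      (g := fun ω => (Set.Ioi i).indicator 1 (N ω)) (hX i).aemeasurable
      ((hind i).comp hN).aemeasurable (hXN.comp (measurable_pi_apply i) (hind i))]
    exact congrArg _ (lintegral_indicator_one (hN measurableSet_Ioi))
  simp_rw [hsum]
  rw [lintegral_tsum (f := fun i ω => X i ω * (Set.Ioi i).indicator 1 (N ω))
    fun i => ((hX i).mul ((hind i).comp hN)).aemeasurable]
  exact tsum_congr hterm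

theorem integrable_sum_range_of_indepFun [IsFiniteMeasure P] {Z : ℕ → Ω → ℝ} {μ m : ℝ}
    (hN : Measurable N) (hZmeas : ∀ i, Measurable (Z i)) (hZnn : ∀ i ω, 0 ≤ Z i ω)
    (hZint : ∀ i, Integrable (Z i) P) (hZmean : ∀ i, ∫ ω, Z i ω ∂P = μ)
    (hZN : IndepFun (fun ω i => Z i ω) N P)
    (htail : HasSum (fun i => P.real {ω | i < N ω}) m) :
    Integrable (fun ω => ∑ i ∈ range (N ω), Z i ω) P ∧
      ∫ ω, ∑ i ∈ range (N ω), Z i ω ∂P = μ * m := by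
  have hS_nn : ∀ ω, 0 ≤ ∑ i ∈ range (N ω), Z i ω := fun ω => sum_nonneg fun i _ => hZnn i ω
  have hS_meas : Measurable fun ω => ∑ i ∈ range (N ω), Z i ω :=
    (measurable_from_prod_countable_left (f := fun p : Ω × ℕ => ∑ i ∈ range p.2, Z i p.1)
      fun n => Finset.measurable_sum (range n) fun i _ => hZmeas i).comp (measurable_id.prodMk hN)
  have hμ : 0 ≤ μ := hZmean 0 ▸ integral_nonneg (hZnn 0)
  have hmμ : 0 ≤ μ * m := mul_nonneg hμ (htail.nonneg fun i => measureReal_nonneg)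
  have hlin : ∫⁻ ω, ENNReal.ofReal (∑ i ∈ range (N ω), Z i ω) ∂P = ENNReal.ofReal (μ * m) := by
    simp_rw [ENNReal.ofReal_sum_of_nonneg fun i _ => hZnn i _]
    rw [lintegral_sum_range_of_indepFun (fun i => (hZmeas i).ennreal_ofReal) hN
      (hZN.comp (φ := fun z i => ENNReal.ofReal (z i)) (by fun_prop) measurable_id)]
    have hZlin (i : ℕ) : ∫⁻ ω, ENNReal.ofReal (Z i ω) ∂P = ENNReal.ofReal μ := by
      rw [← ofReal_integral_eq_lintegral_ofReal (hZint i) (ae_of_all _ (hZnn i)), hZmean]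
    calc ∑' i, (∫⁻ ω, ENNReal.ofReal (Z i ω) ∂P) * P {ω | i < N ω}
        = ∑' i, ENNReal.ofReal μ * ENNReal.ofReal (P.real {ω | i < N ω}) := by
          simp_rw [hZlin, ofReal_measureReal (measure_ne_top P _)]
      _ = ENNReal.ofReal μ * ENNReal.ofReal m := by
          rw [ENNReal.tsum_mul_left, ← htail.tsum_eq,
            ENNReal.ofReal_tsum_of_nonneg (fun i => measureReal_nonneg) htail.summable]
      _ = ENNReal.ofReal (μ * m) := (ENNReal.ofReal_mul hμ).symm
  refine ⟨⟨hS_meas.aestronglyMeasurable, ?_⟩, ?_⟩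
  · rw [hasFiniteIntegral_iff_ofReal (ae_of_all _ hS_nn), hlin]
    exact ENNReal.ofReal_lt_top
  · rw [integral_eq_lintegral_of_nonneg_ae (ae_of_all _ hS_nn) hS_meas.aestronglyMeasurable,
      hlin, ENNReal.toReal_ofReal hmμ]

end Wald

theorem hitting_time_renewal_mean_general
    {Ω : Type*} [MeasurableSpace Ω] (P : Measure Ω) [IsProbabilityMeasure P]
    (s : ℕ) (hs : 2 ≤ s)
    (N : Ω → ℕ) (hNmeas : Measurable N)
    (hNgeo : ∀ k : ℕ, P {ω | N ω = k}
      = ENNReal.ofReal ((1 / (s : ℝ)) * (1 - 1 / (s : ℝ)) ^ k))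
    (Z : ℕ → Ω → ℝ) (μ : ℝ)
    (hZmeas : ∀ i, Measurable (Z i))
    (hZnn : ∀ i, ∀ ω, 0 ≤ Z i ω)
    (hZint : ∀ i, Integrable (Z i) P)
    (hZmean : ∀ i, ∫ ω, Z i ω ∂P = μ)
    (hZN : IndepFun (fun ω => fun i => Z i ω) N P)
    (t : ℝ) (ht : 0 ≤ t)
    (T : Ω → ℝ)
    (hT : ∀ ω, T ω = t * ((N ω : ℝ) + 1) + ∑ i ∈ Finset.range (N ω), Z i ω) :
    Integrable T P ∧ ∫ ω, T ω ∂P = t + ((s : ℝ) - 1) * (t + μ) := by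
  have hs₀ : (0 : ℝ) < s := by positivity
  have hp₁ : 1 / (s : ℝ) ≤ 1 := by
    rw [div_le_one hs₀]; exact_mod_cast (by omega : 1 ≤ s)
  have htail := IsGeometric.hasSum_measureReal_lt hNgeo hNmeas (by positivity) hp₁
  rw [show (1 - 1 / (s : ℝ)) / (1 / s) = s - 1 by field_simp] at htail
  -- each of the `N` failed events costs a search phase `t` plus an escape phase `Z i`
  obtain rfl : T = fun ω => t + ∑ i ∈ range (N ω), (t + Z i ω) := by
    ext ω; rw [hT, sum_add_distrib, sum_const, card_range, nsmul_eq_mul]; ring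
  have hcost_mean (i : ℕ) : ∫ ω, t + Z i ω ∂P = t + μ := by
    rw [integral_add (integrable_const t) (hZint i), integral_const, probReal_univ, one_smul,
      hZmean]
  obtain ⟨hcost_int, hcost_sum⟩ := integrable_sum_range_of_indepFun (Z := fun i ω => t + Z i ω)
    hNmeas (fun i => measurable_const.add (hZmeas i)) (fun i ω => add_nonneg ht (hZnn i ω))
    (fun i => (integrable_const t).add (hZint i)) hcost_mean
    (hZN.comp (φ := fun z i => t + z i) (by fun_prop) measurable_id) htail
  refine ⟨(integrable_const t).add hcost_int, ?_⟩
  rw [integral_add (integrable_const t) hcost_int, hcost_sum, integral_const, probReal_univ, one_smul]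
  ring

/-- Renewal model: with `N` geometric with parameter `1/s` (failures before the first
success), `(Z i)` i.i.d. nonnegative integrable with mean `μ` and independent of `N`,
and `t ≥ 0`, the total hitting time `T = t * (N + 1) + ∑ i < N, Z i` is integrable
with expectation `t + (s - 1) * (t + μ)`. -/
theorem hitting_time_renewal_mean
    {Ω : Type*} [MeasurableSpace Ω] (P : Measure Ω) [IsProbabilityMeasure P]
    (s : ℕ) (hs : 2 ≤ s)
    (N : Ω → ℕ) (hNmeas : Measurable N)
    (hNgeo : ∀ k : ℕ, P {ω | N ω = k}
      = ENNReal.ofReal ((1 / (s : ℝ)) * (1 - 1 / (s : ℝ)) ^ k))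
    (Z : ℕ → Ω → ℝ) (μ : ℝ)
    (hZmeas : ∀ i, Measurable (Z i))
    (hZnn : ∀ i, ∀ ω, 0 ≤ Z i ω)
    (hZint : ∀ i, Integrable (Z i) P)
    (hZmean : ∀ i, ∫ ω, Z i ω ∂P = μ)
    (hZindep : iIndepFun Z P)
    (hZident : ∀ i, IdentDistrib (Z i) (Z 0) P P)
    (hZN : IndepFun (fun ω => fun i => Z i ω) N P)
    (t : ℝ) (ht : 0 ≤ t)
    (T : Ω → ℝ)
    (hT : ∀ ω, T ω = t * ((N ω : ℝ) + 1) + ∑ i ∈ Finset.range (N ω), Z i ω) :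
    Integrable T P ∧ ∫ ω, T ω ∂P = t + ((s : ℝ) - 1) * (t + μ) :=
  hitting_time_renewal_mean_general P s hs N hNmeas hNgeo Z μ hZmeas hZnn hZint hZmean hZN t ht T hT
end

section
/- (Hitting time of SA+FV.) Let (Ω, P) be a probability space; let s, l, a, b be natural numbers with s = l + a + b and l ≥ 1 and s ≥ 2; let C_s, C_a, C_l, D, α be positive reals. Let N : Ω → ℕ be a geometric random variable with parameter 1/s (counting failures before the first success), i.e. P(N = k) = (1/s)·(1 − 1/s)^k for all k ∈ ℕ, and let (Z_i)_{i∈ℕ} be an i.i.d. sequence of nonnegative integrable real random variables, independent of N, with common mean μ = (a·C_a/α + (l − 1)·C_l/α)/s. Define the total hitting time T = (C_s·D·α^{−4})·(N + 1) + Σ_{i<N} Z_i. Then T is integrable and E[T] = C_s·D·α^{−4} + (s − 1)·[ C_s·D·α^{−4} + a·C_a/(s·α) + (l − 1)·C_l/(s·α) ]. -/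
/-!
Wald's identity: split `Ω` into the fibres `{N = k}`. On `{N = k}` the random sum
`∑ i < N, Z i` is the fixed sum `∑ i < k, Z i`, and as each `Z i` is independent of `N` its
integral over the fibre is `μ · k · P(N = k)`. The `Z i` being nonnegative, these are also the
fibre integrals of `|∑ i < N, Z i|`, so they are summable and add up to `μ · E[N]`. Taking all
`Z i = 1` computes `E[N]` itself, which is `(1 - p) / p = s - 1` for the geometric law with
`p = 1 / s`.
-/

open MeasureTheory ProbabilityTheory

lemma Set.iUnion_preimage_singleton_eq_univ {α β : Type*} (f : α → β) :
    ⋃ b, f ⁻¹' {b} = Set.univ :=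
  Set.iUnion_eq_univ_iff.2 fun a => ⟨f a, rfl⟩

lemma eqOn_sum_range_preimage_singleton {α M : Type*} [AddCommMonoid M] {N : α → ℕ}
    {Y : ℕ → α → M} (k : ℕ) :
    Set.EqOn (fun ω => ∑ i ∈ Finset.range (N ω), Y i ω)
      (fun ω => ∑ i ∈ Finset.range k, Y i ω) (N ⁻¹' {k}) :=
  fun ω (hω : N ω = k) => by simp only [hω]

namespace ProbabilityTheory

variable {Ω : Type*} [MeasurableSpace Ω] {P : Measure Ω}

lemma IndepFun.setIntegral_preimage_eq_mul {α : Type*} [MeasurableSpace α] {X : Ω → α}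
    {Y : Ω → ℝ} (hXY : IndepFun Y X P) (hX : Measurable X) (hY : AEStronglyMeasurable Y P)
    {s : Set α} (hs : MeasurableSet s) :
    ∫ ω in X ⁻¹' s, Y ω ∂P = P.real (X ⁻¹' s) * ∫ ω, Y ω ∂P := by
  have hI : Measurable (s.indicator (1 : α → ℝ)) := measurable_const.indicator hs
  have hY_ind : (X ⁻¹' s).indicator Y = fun ω => s.indicator 1 (X ω) * Y ω := by
    ext ω; by_cases h : X ω ∈ s <;> simp [h]
  have h1_ind : (X ⁻¹' s).indicator 1 = fun ω => s.indicator (1 : α → ℝ) (X ω) := by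
    ext ω; by_cases h : X ω ∈ s <;> simp [h]
  rw [← integral_indicator (hX hs), ← integral_indicator_one (hX hs), hY_ind, h1_ind]
  exact (hXY.symm.comp hI measurable_id).integral_fun_mul_eq_mul_integral
    (hI.comp hX).aestronglyMeasurable hY

section Wald

variable {N : Ω → ℕ} {Y : ℕ → Ω → ℝ} {m e : ℝ}

lemma integrableOn_sum_range_preimage_singleton (hN : Measurable N)
    (hY : ∀ i, Integrable (Y i) P) (k : ℕ) :
    IntegrableOn (fun ω => ∑ i ∈ Finset.range (N ω), Y i ω) (N ⁻¹' {k}) P :=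
  (integrableOn_congr_fun (eqOn_sum_range_preimage_singleton k)
    (hN (measurableSet_singleton k))).2
    (integrable_finsetSum (Finset.range k) fun i _ => (hY i).integrableOn)

lemma setIntegral_sum_range_preimage_singleton (hN : Measurable N)
    (hY : ∀ i, Integrable (Y i) P) (hm : ∀ i, ∫ ω, Y i ω ∂P = m)
    (hind : ∀ i, IndepFun (Y i) N P) (k : ℕ) :
    ∫ ω in N ⁻¹' {k}, ∑ i ∈ Finset.range (N ω), Y i ω ∂P = m * (k * P.real (N ⁻¹' {k})) := by
  rw [setIntegral_congr_fun (hN (measurableSet_singleton k))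
      (eqOn_sum_range_preimage_singleton k),
    integral_finsetSum _ fun i _ => (hY i).integrableOn]
  simp only [(hind _).setIntegral_preimage_eq_mul hN (hY _).aestronglyMeasurable
    (measurableSet_singleton k), hm, Finset.sum_const, Finset.card_range, nsmul_eq_mul]
  ring

theorem integrable_sum_range_of_indepFun (hN : Measurable N)
    (hY : ∀ i, Integrable (Y i) P) (hY0 : ∀ i, 0 ≤ᵐ[P] Y i) (hm : ∀ i, ∫ ω, Y i ω ∂P = m)
    (hind : ∀ i, IndepFun (Y i) N P) (he : HasSum (fun k : ℕ => k * P.real (N ⁻¹' {k})) e) :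
    Integrable (fun ω => ∑ i ∈ Finset.range (N ω), Y i ω) P := by
  have hS0 : ∀ᵐ ω ∂P, 0 ≤ ∑ i ∈ Finset.range (N ω), Y i ω := by
    filter_upwards [ae_all_iff.2 hY0] with ω hω using Finset.sum_nonneg fun i _ => hω i
  have hnorm (k : ℕ) : ∫ ω in N ⁻¹' {k}, ‖∑ i ∈ Finset.range (N ω), Y i ω‖ ∂P
      = m * (k * P.real (N ⁻¹' {k})) := by
    rw [← setIntegral_sum_range_preimage_singleton hN hY hm hind k]
    refine integral_congr_ae (ae_restrict_of_ae ?_)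
    filter_upwards [hS0] with ω hω using Real.norm_of_nonneg hω
  rw [← integrableOn_univ, ← Set.iUnion_preimage_singleton_eq_univ N]
  exact integrableOn_iUnion_of_summable_integral_norm
    (integrableOn_sum_range_preimage_singleton hN hY)
    ((funext hnorm) ▸ (he.mul_left m).summable)

theorem integral_sum_range_of_indepFun (hN : Measurable N)
    (hY : ∀ i, Integrable (Y i) P) (hY0 : ∀ i, 0 ≤ᵐ[P] Y i) (hm : ∀ i, ∫ ω, Y i ω ∂P = m)
    (hind : ∀ i, IndepFun (Y i) N P) (he : HasSum (fun k : ℕ => k * P.real (N ⁻¹' {k})) e) :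
    ∫ ω, ∑ i ∈ Finset.range (N ω), Y i ω ∂P = m * e := by
  have hS : IntegrableOn (fun ω => ∑ i ∈ Finset.range (N ω), Y i ω) (⋃ k, N ⁻¹' {k}) P := by
    rw [Set.iUnion_preimage_singleton_eq_univ, integrableOn_univ]
    exact integrable_sum_range_of_indepFun hN hY hY0 hm hind he
  have hfibres := hasSum_integral_iUnion (fun k => hN (measurableSet_singleton k))
    (pairwise_disjoint_fiber N) hS
  rw [Set.iUnion_preimage_singleton_eq_univ, setIntegral_univ] at hfibres
  refine hfibres.unique ?_
  simpa only [setIntegral_sum_range_preimage_singleton hN hY hm hind] using he.mul_left m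

variable [IsProbabilityMeasure P]

theorem integrable_natCast_of_hasSum (hN : Measurable N)
    (he : HasSum (fun k : ℕ => k * P.real (N ⁻¹' {k})) e) :
    Integrable (fun ω => (N ω : ℝ)) P := by
  simpa using integrable_sum_range_of_indepFun (Y := fun _ _ => 1) hN
    (fun _ => integrable_const 1) (fun _ => ae_of_all _ fun _ => zero_le_one)
    (fun _ => integral_const 1) (fun _ => indepFun_const_left 1 N) he

theorem integral_natCast_of_hasSum (hN : Measurable N)
    (he : HasSum (fun k : ℕ => k * P.real (N ⁻¹' {k})) e) :
    ∫ ω, (N ω : ℝ) ∂P = e := by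
  simpa using integral_sum_range_of_indepFun (Y := fun _ _ => 1) hN
    (fun _ => integrable_const 1) (fun _ => ae_of_all _ fun _ => zero_le_one)
    (fun _ => integral_const 1) (fun _ => indepFun_const_left 1 N) he

end Wald

lemma hasSum_natCast_mul_measureReal_of_geometric {N : Ω → ℕ} {p : ℝ} (hp0 : 0 < p)
    (hp1 : p ≤ 1) (hN : ∀ k : ℕ, P {ω | N ω = k} = ENNReal.ofReal (p * (1 - p) ^ k)) :
    HasSum (fun k : ℕ => k * P.real (N ⁻¹' {k})) ((1 - p) / p) := by
  have hq : ‖1 - p‖ < 1 := by rw [Real.norm_of_nonneg (by linarith)]; linarith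
  have hP (k : ℕ) : P.real (N ⁻¹' {k}) = p * (1 - p) ^ k := by
    rw [measureReal_def, show N ⁻¹' {k} = {ω | N ω = k} from rfl, hN k,
      ENNReal.toReal_ofReal (mul_nonneg hp0.le (pow_nonneg (by linarith) k))]
  have hmean : p * ((1 - p) / (1 - (1 - p)) ^ 2) = (1 - p) / p := by
    rw [sub_sub_cancel]; field_simp
  rw [← hmean]
  exact ((hasSum_coe_mul_geometric_of_norm_lt_one hq).mul_left p).congr_fun fun k => by
    rw [hP]; ring

end ProbabilityTheory

theorem hitting_time_SA_FV_general
    {Ω : Type*} [MeasurableSpace Ω] (P : Measure Ω) [IsProbabilityMeasure P]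
    (s l a : ℕ) (hs : 2 ≤ s)
    (Cs Ca Cl D α : ℝ)
    (N : Ω → ℕ) (hNmeas : Measurable N)
    (hNgeo : ∀ k : ℕ, P {ω | N ω = k}
      = ENNReal.ofReal ((1 / (s : ℝ)) * (1 - 1 / (s : ℝ)) ^ k))
    (Z : ℕ → Ω → ℝ)
    (hZnn : ∀ i, ∀ ω, 0 ≤ Z i ω)
    (hZint : ∀ i, Integrable (Z i) P)
    (hZmean : ∀ i, ∫ ω, Z i ω ∂P
      = ((a : ℝ) * Ca / α + ((l : ℝ) - 1) * Cl / α) / (s : ℝ))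
    (hZN : IndepFun (fun ω => fun i => Z i ω) N P)
    (T : Ω → ℝ)
    (hT : ∀ ω, T ω = (Cs * D * α ^ (-4 : ℤ)) * ((N ω : ℝ) + 1)
      + ∑ i ∈ Finset.range (N ω), Z i ω) :
    Integrable T P ∧
      ∫ ω, T ω ∂P = Cs * D * α ^ (-4 : ℤ)
        + ((s : ℝ) - 1) * (Cs * D * α ^ (-4 : ℤ)
          + (a : ℝ) * Ca / ((s : ℝ) * α) + ((l : ℝ) - 1) * Cl / ((s : ℝ) * α)) := by
  have hs_real : (2 : ℝ) ≤ s := by exact_mod_cast hs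
  have hNmean := hasSum_natCast_mul_measureReal_of_geometric (by positivity)
    (by rw [div_le_one (by positivity)]; linarith) hNgeo
  have hZ0 (i : ℕ) : 0 ≤ᵐ[P] Z i := ae_of_all _ (hZnn i)
  have hZiN (i : ℕ) : IndepFun (Z i) N P := hZN.comp (measurable_pi_apply i) measurable_id
  have hNint := integrable_natCast_of_hasSum hNmeas hNmean
  have hN1int : Integrable (fun ω => (N ω : ℝ) + 1) P := hNint.add (integrable_const 1)
  have hSint := integrable_sum_range_of_indepFun hNmeas hZint hZ0 hZmean hZiN hNmean
  obtain rfl : T = _ := funext hT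
  refine ⟨(hN1int.const_mul _).add hSint, ?_⟩
  rw [integral_add (hN1int.const_mul _) hSint, integral_const_mul,
    integral_add hNint (integrable_const 1), integral_natCast_of_hasSum hNmeas hNmean,
    integral_sum_range_of_indepFun hNmeas hZint hZ0 hZmean hZiN hNmean, integral_const,
    probReal_univ, smul_eq_mul]
  field_simp
  ring

/-- Hitting time of simulated annealing with Fleming-Viot: with `s = l + a + b`
stationary points, search-phase duration `C_s * D * α⁻⁴`, mean escape cost per failure
`μ = (a * C_a / α + (l - 1) * C_l / α) / s` (barren plateaus escaped immediately), the
expected hitting time of the global minimizer is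
`C_s * D * α⁻⁴ + (s - 1) * (C_s * D * α⁻⁴ + a * C_a / (s * α) + (l - 1) * C_l / (s * α))`. -/
theorem hitting_time_SA_FV
    {Ω : Type*} [MeasurableSpace Ω] (P : Measure Ω) [IsProbabilityMeasure P]
    (s l a b : ℕ) (hsum : s = l + a + b) (hl : 1 ≤ l) (hs : 2 ≤ s)
    (Cs Ca Cl D α : ℝ)
    (hCs : 0 < Cs) (hCa : 0 < Ca) (hCl : 0 < Cl) (hD : 0 < D) (hα : 0 < α)
    (N : Ω → ℕ) (hNmeas : Measurable N)
    (hNgeo : ∀ k : ℕ, P {ω | N ω = k}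
      = ENNReal.ofReal ((1 / (s : ℝ)) * (1 - 1 / (s : ℝ)) ^ k))
    (Z : ℕ → Ω → ℝ)
    (hZmeas : ∀ i, Measurable (Z i))
    (hZnn : ∀ i, ∀ ω, 0 ≤ Z i ω)
    (hZint : ∀ i, Integrable (Z i) P)
    (hZmean : ∀ i, ∫ ω, Z i ω ∂P
      = ((a : ℝ) * Ca / α + ((l : ℝ) - 1) * Cl / α) / (s : ℝ))
    (hZindep : iIndepFun Z P)
    (hZident : ∀ i, IdentDistrib (Z i) (Z 0) P P)
    (hZN : IndepFun (fun ω => fun i => Z i ω) N P)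
    (T : Ω → ℝ)
    (hT : ∀ ω, T ω = (Cs * D * α ^ (-4 : ℤ)) * ((N ω : ℝ) + 1)
      + ∑ i ∈ Finset.range (N ω), Z i ω) :
    Integrable T P ∧
      ∫ ω, T ω ∂P = Cs * D * α ^ (-4 : ℤ)
        + ((s : ℝ) - 1) * (Cs * D * α ^ (-4 : ℤ)
          + (a : ℝ) * Ca / ((s : ℝ) * α) + ((l : ℝ) - 1) * Cl / ((s : ℝ) * α)) :=
  hitting_time_SA_FV_general P s l a hs Cs Ca Cl D α N hNmeas hNgeo Z hZnn hZint hZmean hZN T hT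
end

section
/- (Hitting time of SA without FV.) Let (Ω, P) be a probability space; let s, l, a, b be natural numbers with s = l + a + b, l ≥ 1, b ≥ 1, and s ≥ 2; let C_s, C_a, C_l, C_f, D, α be positive reals and let B ∈ (0, 1). Let N : Ω → ℕ be a geometric random variable with parameter 1/s (counting failures before the first success), i.e. P(N = k) = (1/s)·(1 − 1/s)^k for all k ∈ ℕ, and let (Z_i)_{i∈ℕ} be an i.i.d. sequence of nonnegative integrable real random variables, independent of N, with common mean μ = (a·C_a/α + (l − 1)·C_l/α + C_f·B·D/b)/s. Define the total hitting time T = (C_s·D·α^{−4})·(N + 1) + Σ_{i<N} Z_i. Then T is integrable and E[T] = C_s·D·α^{−4} + (s − 1)·[ C_s·D·α^{−4} + a·C_a/(s·α) + (l − 1)·C_l/(s·α) + C_f·B·D/(s·b) ]. -/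
/-!
Conditioning on the number of failures: `∑_{i<N} Z i = ∑' i, Z i · 1{i < N}`, and each `Z i` is
independent of the event `{i < N}`, so (Wald's identity) the expected escape cost is
`μ · ∑ i, P(i < N) = μ · E[N]`. For `N` geometric with parameter `1/s` the tail probabilities are
`P(i < N) = (1 - 1/s)^(i+1)`, which sum to `E[N] = s - 1`.
-/

open MeasureTheory ProbabilityTheory Finset

section TermwiseIntegration

variable {α E : Type*} [MeasurableSpace α] {μ : Measure α} [NormedAddCommGroup E]

theorem integrable_tsum_of_summable_integral_norm {F : ℕ → α → E}
    (hF_int : ∀ i, Integrable (F i) μ) (hF_sum : Summable fun i ↦ ∫ a, ‖F i a‖ ∂μ)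
    (hF_ae : ∀ᵐ a ∂μ, Summable fun i ↦ F i a) :
    Integrable (fun a ↦ ∑' i, F i a) μ := by
  have hmeas : AEStronglyMeasurable (fun a ↦ ∑' i, F i a) μ :=
    aestronglyMeasurable_of_tendsto_ae _
      (fun n ↦ Finset.aestronglyMeasurable_fun_sum _ fun i _ ↦ (hF_int i).1)
      (hF_ae.mono fun a ha ↦ ha.hasSum.tendsto_sum_nat)
  have hfinite : ∑' i, ∫⁻ a, ‖F i a‖ₑ ∂μ ≠ ⊤ := by
    simp_rw [← ofReal_integral_norm_eq_lintegral_enorm (hF_int _)]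
    rw [← ENNReal.ofReal_tsum_of_nonneg (fun i ↦ integral_nonneg fun a ↦ norm_nonneg _) hF_sum]
    exact ENNReal.ofReal_ne_top
  refine ⟨hmeas, ?_⟩
  calc ∫⁻ a, ‖∑' i, F i a‖ₑ ∂μ ≤ ∫⁻ a, ∑' i, ‖F i a‖ₑ ∂μ :=
        lintegral_mono fun a ↦ enorm_tsum_le_tsum_enorm
    _ = ∑' i, ∫⁻ a, ‖F i a‖ₑ ∂μ := lintegral_tsum fun i ↦ (hF_int i).1.enorm
    _ < ⊤ := hfinite.lt_top

end TermwiseIntegration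

section Wald

variable {Ω : Type*} [MeasurableSpace Ω] {P : Measure Ω}

theorem hasSum_mul_indicator_lt (n : ℕ) (f : ℕ → ℝ) :
    HasSum (fun i ↦ f i * (Set.Ioi i).indicator 1 n) (∑ i ∈ range n, f i) := by
  have hsupp : ∀ i ∉ range n, f i * (Set.Ioi i).indicator 1 n = 0 := fun i hi ↦ by
    simp [Set.indicator_of_notMem (show n ∉ Set.Ioi i by simpa using hi)]
  have hsum : ∑ i ∈ range n, f i * (Set.Ioi i).indicator 1 n = ∑ i ∈ range n, f i :=
    Finset.sum_congr rfl fun i hi ↦ by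
      simp [Set.indicator_of_mem (show n ∈ Set.Ioi i by simpa using hi)]
  exact hsum ▸ hasSum_sum_of_ne_finset_zero hsupp

theorem integrable_and_integral_sum_range_of_indepFun [IsFiniteMeasure P]
    {N : Ω → ℕ} {Z : ℕ → Ω → ℝ} {m e : ℝ}
    (hN : Measurable N) (hZ_int : ∀ i, Integrable (Z i) P) (hZ_nonneg : ∀ i ω, 0 ≤ Z i ω)
    (hZ_mean : ∀ i, ∫ ω, Z i ω ∂P = m) (hZN : IndepFun (fun ω i ↦ Z i ω) N P)
    (h_tail : HasSum (fun i ↦ P.real {ω | i < N ω}) e) :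
    Integrable (fun ω ↦ ∑ i ∈ range (N ω), Z i ω) P ∧
      ∫ ω, ∑ i ∈ range (N ω), Z i ω ∂P = m * e := by
  set F : ℕ → Ω → ℝ := fun i ω ↦ Z i ω * (Set.Ioi i).indicator 1 (N ω)
  have hsum_eq : (fun ω ↦ ∑ i ∈ range (N ω), Z i ω) = fun ω ↦ ∑' i, F i ω :=
    funext fun ω ↦ (hasSum_mul_indicator_lt (N ω) (Z · ω)).tsum_eq.symm
  have hind : ∀ i, IndepFun (Z i) ((Set.Ioi i).indicator (1 : ℕ → ℝ) ∘ N) P := fun i ↦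
    hZN.comp (measurable_pi_apply i) (measurable_of_countable _)
  have hcount_int : ∀ i, Integrable ((Set.Ioi i).indicator (1 : ℕ → ℝ) ∘ N) P := fun i ↦
    (integrable_const (1 : ℝ)).indicator (hN measurableSet_Ioi) |>.congr
      (ae_of_all _ fun ω ↦ Set.indicator_comp_right N (s := Set.Ioi i) (g := 1) (x := ω))
  have hF_int : ∀ i, Integrable (F i) P := fun i ↦
    (hind i).integrable_mul (hZ_int i) (hcount_int i)
  have hF_integral : ∀ i, ∫ ω, F i ω ∂P = m * P.real {ω | i < N ω} := fun i ↦ by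
    rw [show ∫ ω, F i ω ∂P = ∫ ω, (Z i * (Set.Ioi i).indicator (1 : ℕ → ℝ) ∘ N) ω ∂P from rfl,
      (hind i).integral_mul_eq_mul_integral (hZ_int i).1 (hcount_int i).1, hZ_mean i]
    congr 1
    simp_rw [Function.comp_def, ← Set.indicator_comp_right N]
    exact integral_indicator_one (hN measurableSet_Ioi)
  have hF_norm : (fun i ↦ ∫ ω, ‖F i ω‖ ∂P) = fun i ↦ ∫ ω, F i ω ∂P := funext fun i ↦
    integral_congr_ae <| ae_of_all _ fun ω ↦ Real.norm_of_nonneg <|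
      mul_nonneg (hZ_nonneg i ω) (Set.indicator_nonneg (fun _ _ ↦ zero_le_one) _)
  have hF_hasSum : HasSum (fun i ↦ ∫ ω, F i ω ∂P) (m * e) := by
    simpa only [hF_integral] using h_tail.mul_left m
  have hF_summable : Summable fun i ↦ ∫ ω, ‖F i ω‖ ∂P := hF_norm ▸ hF_hasSum.summable
  rw [hsum_eq]
  refine ⟨integrable_tsum_of_summable_integral_norm hF_int hF_summable
    (ae_of_all _ fun ω ↦ (hasSum_mul_indicator_lt (N ω) (Z · ω)).summable), ?_⟩
  exact (hasSum_integral_of_summable_integral_norm hF_int hF_summable).unique hF_hasSum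

end Wald

section Geometric

variable {Ω : Type*} [MeasurableSpace Ω] {P : Measure Ω} {N : Ω → ℕ} {p : ℝ}

theorem measure_lt_of_geometric (hN : Measurable N) (hp₀ : 0 < p) (hp₁ : p ≤ 1)
    (hgeo : ∀ k : ℕ, P {ω | N ω = k} = ENNReal.ofReal (p * (1 - p) ^ k)) (i : ℕ) :
    P {ω | i < N ω} = ENNReal.ofReal ((1 - p) ^ (i + 1)) := by
  have hunion : {ω | i < N ω} = ⋃ k : ℕ, {ω | N ω = i + 1 + k} := by
    ext ω
    simp only [Set.mem_ofPred_eq, Set.mem_iUnion]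
    exact ⟨fun h ↦ ⟨N ω - (i + 1), by omega⟩, fun ⟨k, hk⟩ ↦ by omega⟩
  have hdisj : Pairwise (Function.onFun Disjoint fun k : ℕ ↦ {ω | N ω = i + 1 + k}) :=
    fun m n hmn ↦ Set.disjoint_left.2 fun ω (hm : N ω = _) (hn : N ω = _) ↦ hmn (by omega)
  have hgeom : HasSum (fun k : ℕ ↦ p * (1 - p) ^ (i + 1 + k)) ((1 - p) ^ (i + 1)) := by
    have h := ((hasSum_geometric_of_lt_one (r := 1 - p) (by linarith) (by linarith)).mul_left
      p).mul_left ((1 - p) ^ (i + 1))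
    rw [sub_sub_cancel, mul_inv_cancel₀ hp₀.ne', mul_one] at h
    simpa only [pow_add, mul_left_comm] using h
  rw [hunion, measure_iUnion hdisj fun k ↦ hN (measurableSet_singleton _)]
  simp_rw [hgeo]
  rw [← ENNReal.ofReal_tsum_of_nonneg (fun k ↦ by have := sub_nonneg.2 hp₁; positivity)
    hgeom.summable, hgeom.tsum_eq]

theorem hasSum_measureReal_lt_of_geometric (hN : Measurable N) (hp₀ : 0 < p) (hp₁ : p ≤ 1)
    (hgeo : ∀ k : ℕ, P {ω | N ω = k} = ENNReal.ofReal (p * (1 - p) ^ k)) :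
    HasSum (fun i ↦ P.real {ω | i < N ω}) ((1 - p) / p) := by
  have hq : 0 ≤ 1 - p := sub_nonneg.2 hp₁
  simp_rw [measureReal_def, measure_lt_of_geometric hN hp₀ hp₁ hgeo,
    ENNReal.toReal_ofReal (pow_nonneg hq _)]
  have h := (hasSum_geometric_of_lt_one hq (by linarith)).mul_right (1 - p)
  rw [sub_sub_cancel, ← div_eq_inv_mul] at h
  simpa only [← pow_succ] using h

end Geometric

theorem hitting_time_SA_no_FV_general
    {Ω : Type*} [MeasurableSpace Ω] (P : Measure Ω) [IsProbabilityMeasure P]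
    (s l a b : ℕ) (hs : 2 ≤ s)
    (Cs Ca Cl Cf D α B : ℝ)
    (N : Ω → ℕ) (hNmeas : Measurable N)
    (hNgeo : ∀ k : ℕ, P {ω | N ω = k}
      = ENNReal.ofReal ((1 / (s : ℝ)) * (1 - 1 / (s : ℝ)) ^ k))
    (Z : ℕ → Ω → ℝ)
    (hZnn : ∀ i, ∀ ω, 0 ≤ Z i ω)
    (hZint : ∀ i, Integrable (Z i) P)
    (hZmean : ∀ i, ∫ ω, Z i ω ∂P
      = ((a : ℝ) * Ca / α + ((l : ℝ) - 1) * Cl / α + Cf * B * D / (b : ℝ)) / (s : ℝ))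
    (hZN : IndepFun (fun ω => fun i => Z i ω) N P)
    (T : Ω → ℝ)
    (hT : ∀ ω, T ω = (Cs * D * α ^ (-4 : ℤ)) * ((N ω : ℝ) + 1)
      + ∑ i ∈ Finset.range (N ω), Z i ω) :
    Integrable T P ∧
      ∫ ω, T ω ∂P = Cs * D * α ^ (-4 : ℤ)
        + ((s : ℝ) - 1) * (Cs * D * α ^ (-4 : ℤ)
          + (a : ℝ) * Ca / ((s : ℝ) * α) + ((l : ℝ) - 1) * Cl / ((s : ℝ) * α)
          + Cf * B * D / ((s : ℝ) * (b : ℝ))) := by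
  have hs₀ : (0 : ℝ) < s := by exact_mod_cast (show 0 < s by omega)
  have h_tail : HasSum (fun i ↦ P.real {ω | i < N ω}) ((s : ℝ) - 1) := by
    convert hasSum_measureReal_lt_of_geometric hNmeas (by positivity)
      ((div_le_one hs₀).2 (by exact_mod_cast (show 1 ≤ s by omega))) hNgeo using 1
    field_simp
  obtain ⟨hN_int, hN_mean⟩ :=
    integrable_and_integral_sum_range_of_indepFun (Z := fun _ _ ↦ 1) (m := 1) hNmeas
      (fun _ ↦ integrable_const 1) (fun _ _ ↦ zero_le_one) (fun _ ↦ by simp)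
      (indepFun_const_left _ N) h_tail
  simp only [sum_const, card_range, nsmul_eq_mul, mul_one, one_mul] at hN_int hN_mean
  obtain ⟨hS_int, hS_mean⟩ :=
    integrable_and_integral_sum_range_of_indepFun hNmeas hZint hZnn hZmean hZN h_tail
  have hN_succ_int : Integrable (fun ω ↦ (N ω : ℝ) + 1) P := hN_int.add (integrable_const 1)
  rw [funext hT]
  refine ⟨(hN_succ_int.const_mul _).add hS_int, ?_⟩
  rw [integral_add (hN_succ_int.const_mul _) hS_int, integral_const_mul,
    integral_add hN_int (integrable_const 1), hN_mean, hS_mean]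
  simp only [integral_const, probReal_univ, smul_eq_mul, mul_one]
  ring

/-- Hitting time of plain simulated annealing (no Fleming-Viot): as in the FV case,
but each visit to a barren plateau additionally costs the expected sojourn time of a
Gaussian random walk, contributing `C_f * B * D / (s * b)` per failure. -/
theorem hitting_time_SA_no_FV
    {Ω : Type*} [MeasurableSpace Ω] (P : Measure Ω) [IsProbabilityMeasure P]
    (s l a b : ℕ) (hsum : s = l + a + b) (hl : 1 ≤ l) (hb : 1 ≤ b) (hs : 2 ≤ s)
    (Cs Ca Cl Cf D α B : ℝ)
    (hCs : 0 < Cs) (hCa : 0 < Ca) (hCl : 0 < Cl) (hCf : 0 < Cf)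
    (hD : 0 < D) (hα : 0 < α) (hB : B ∈ Set.Ioo (0 : ℝ) 1)
    (N : Ω → ℕ) (hNmeas : Measurable N)
    (hNgeo : ∀ k : ℕ, P {ω | N ω = k}
      = ENNReal.ofReal ((1 / (s : ℝ)) * (1 - 1 / (s : ℝ)) ^ k))
    (Z : ℕ → Ω → ℝ)
    (hZmeas : ∀ i, Measurable (Z i))
    (hZnn : ∀ i, ∀ ω, 0 ≤ Z i ω)
    (hZint : ∀ i, Integrable (Z i) P)
    (hZmean : ∀ i, ∫ ω, Z i ω ∂P
      = ((a : ℝ) * Ca / α + ((l : ℝ) - 1) * Cl / α + Cf * B * D / (b : ℝ)) / (s : ℝ))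
    (hZindep : iIndepFun Z P)
    (hZident : ∀ i, IdentDistrib (Z i) (Z 0) P P)
    (hZN : IndepFun (fun ω => fun i => Z i ω) N P)
    (T : Ω → ℝ)
    (hT : ∀ ω, T ω = (Cs * D * α ^ (-4 : ℤ)) * ((N ω : ℝ) + 1)
      + ∑ i ∈ Finset.range (N ω), Z i ω) :
    Integrable T P ∧
      ∫ ω, T ω ∂P = Cs * D * α ^ (-4 : ℤ)
        + ((s : ℝ) - 1) * (Cs * D * α ^ (-4 : ℤ)
          + (a : ℝ) * Ca / ((s : ℝ) * α) + ((l : ℝ) - 1) * Cl / ((s : ℝ) * α)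
          + Cf * B * D / ((s : ℝ) * (b : ℝ))) :=
  hitting_time_SA_no_FV_general P s l a b hs Cs Ca Cl Cf D α B N hNmeas hNgeo Z hZnn hZint hZmean
    hZN T hT
end
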